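/- Let U be a non-singular orthogonal geometry over a field F of characteristic ≠ 2, C(U) its universal Clifford algebra, and U_para = F·1 ⊕ U ⊆ C(U) the space of paravectors. If x ∈ C(U)^× satisfies x u (x')⁻¹ ∈ U for all u ∈ U (i.e., x ∈ Γ(U)), then x y (x')⁻¹ ∈ U_para for all y ∈ U_para; that is, Γ(U) ⊆ Γ(U_para). -/

import Mathlib

/-!
Put `w = (x')⁻¹ x`. Since `x u (x')⁻¹` lies in `U`, the principal involution only changes its
sign, so `x u (x')⁻¹ = x' u x⁻¹`, i.e. `u w = w' u` for every `u ∈ U`. Now `u w - w' u` is the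
contraction of `w` by the linear form `-2 S(u, ·)`, and every linear form is of this shape because
`S` is non-degenerate; so all contractions of `w` vanish, which forces `w` to be a scalar. (For a
basis `e₁, …, eₖ`, the subalgebra generated by `e₁, …, eₖ` is `A + e₁ A` with `A` generated by
`e₂, …, eₖ`; contraction by `e₁*` kills `A` and sends `e₁ a` to `a`.) Hence `x (x')⁻¹ = x w x⁻¹`
is the scalar `w`, and `x (c + u) (x')⁻¹ = c w + x u (x')⁻¹` is a paravector.
-/

open CliffordAlgebra

theorem Algebra.adjoin_le_of_mul_mem {R A : Type*} [CommSemiring R] [Semiring A] [Algebra R A]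
    {s : Set A} {N : Submodule R A} (one_mem : 1 ∈ N) (mul_mem : ∀ a ∈ s, ∀ y ∈ N, a * y ∈ N) :
    Subalgebra.toSubmodule (Algebra.adjoin R s) ≤ N := by
  rw [Algebra.adjoin_eq_span, Submodule.span_le]
  intro x hx
  induction hx using Submonoid.closure_induction_left with
  | one => exact one_mem
  | mul_left a ha y _ hy => exact mul_mem a ha y hy

namespace CliffordAlgebra

variable {R M : Type*} [CommRing R] [AddCommGroup M] [Module R M] {Q : QuadraticForm R M}

theorem ι_mul_sub_involute_mul_ι (v : M) (x : CliffordAlgebra Q) :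
    ι Q v * x - involute x * ι Q v = contractLeft (QuadraticMap.polarBilin Q v) x := by
  induction x using CliffordAlgebra.left_induction with
  | algebraMap r => rw [AlgHom.commutes, contractLeft_algebraMap, Algebra.commutes, sub_self]
  | add x y hx hy => rw [map_add, map_add, ← hx, ← hy]; noncomm_ring
  | ι_mul x m hx =>
    rw [contractLeft_ι_mul, ← hx, map_mul, involute_ι, QuadraticMap.polarBilin_apply_apply,
      Algebra.smul_def, ← ι_mul_ι_add_swap]
    noncomm_ring

theorem contractLeft_eq_zero_of_mem_adjoin {d : Module.Dual R M} {S : Set M}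
    (hd : ∀ s ∈ S, d s = 0) {x : CliffordAlgebra Q} (hx : x ∈ Algebra.adjoin R (ι Q '' S)) :
    contractLeft d x = 0 := by
  suffices Subalgebra.toSubmodule (Algebra.adjoin R (ι Q '' S)) ≤ LinearMap.ker (contractLeft d)
    from this hx
  refine Algebra.adjoin_le_of_mul_mem (by simp [contractLeft_one]) ?_
  rintro _ ⟨s, hs, rfl⟩ y hy
  rw [LinearMap.mem_ker] at hy ⊢
  rw [contractLeft_ι_mul, hd s hs, hy, zero_smul, mul_zero, sub_zero]

theorem adjoin_ι_insert_le (v : M) (S : Set M) :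
    Subalgebra.toSubmodule (Algebra.adjoin R (ι Q '' insert v S)) ≤
      Subalgebra.toSubmodule (Algebra.adjoin R (ι Q '' S)) ⊔
        (Subalgebra.toSubmodule (Algebra.adjoin R (ι Q '' S))).map
          (LinearMap.mulLeft R (ι Q v)) := by
  set A := Algebra.adjoin R (ι Q '' S)
  refine Algebra.adjoin_le_of_mul_mem (Submodule.mem_sup_left A.one_mem) ?_
  rintro _ ⟨m, hm, rfl⟩ y hy
  obtain ⟨a, ha, _, ⟨c, hc, rfl⟩, rfl⟩ := Submodule.mem_sup.mp hy
  rw [LinearMap.mulLeft_apply]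
  rcases hm with rfl | hm
  · rw [mul_add, ← mul_assoc, ι_sq_scalar, ← Algebra.smul_def, add_comm]
    exact Submodule.add_mem_sup (A.smul_mem hc _) (Submodule.mem_map_of_mem ha)
  · have hmA : ι Q m ∈ A := Algebra.subset_adjoin ⟨m, hm, rfl⟩
    refine Submodule.mem_sup.mpr ⟨ι Q m * a + QuadraticMap.polar Q m v • c,
      add_mem (A.mul_mem hmA ha) (A.smul_mem hc _), ι Q v * -(ι Q m * c),
      Submodule.mem_map_of_mem (A.neg_mem (A.mul_mem hmA hc)), ?_⟩
    rw [mul_add, ← mul_assoc (ι Q m), ι_mul_ι_comm, Algebra.smul_def]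
    noncomm_ring

theorem adjoin_ι_image_eq_top {S : Set M} (hS : Submodule.span R S = ⊤) :
    Algebra.adjoin R (ι Q '' S) = ⊤ := by
  refine top_le_iff.mp (adjoin_range_ι (Q := Q) ▸ Algebra.adjoin_le ?_)
  rintro _ ⟨m, rfl⟩
  have hm : ι Q m ∈ Submodule.span R (ι Q '' S) := by
    rw [Submodule.span_image, hS]
    exact Submodule.mem_map_of_mem Submodule.mem_top
  exact Algebra.span_le_adjoin R _ hm

theorem mem_bot_of_contractLeft_coord_eq_zero {I : Type*} (b : Module.Basis I R M) (s : Finset I)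
    {x : CliffordAlgebra Q} (hx : x ∈ Algebra.adjoin R (ι Q '' (b '' s)))
    (h : ∀ i ∈ s, contractLeft (b.coord i) x = 0) :
    x ∈ (⊥ : Subalgebra R (CliffordAlgebra Q)) := by
  classical
  induction s using Finset.induction_on generalizing x with
  | empty => simpa using hx
  | insert i s hi ih =>
    rw [Finset.coe_insert, Set.image_insert_eq] at hx
    obtain ⟨a, ha, _, ⟨c, hc, rfl⟩, rfl⟩ := Submodule.mem_sup.mp (adjoin_ι_insert_le _ _ hx)
    have hcoord : ∀ m ∈ b '' s, b.coord i m = 0 := by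
      rintro _ ⟨j, hj, rfl⟩
      simp [ne_of_mem_of_not_mem hj hi]
    have hc : c = 0 := by
      simpa [contractLeft_eq_zero_of_mem_adjoin hcoord ha, contractLeft_ι_mul,
        contractLeft_eq_zero_of_mem_adjoin hcoord hc] using h i (Finset.mem_insert_self i s)
    subst hc
    rw [map_zero, add_zero] at h ⊢
    exact ih ha fun j hj => h j (Finset.mem_insert_of_mem hj)

theorem mem_bot_of_forall_contractLeft_eq_zero [Module.Free R M] [Module.Finite R M]
    {x : CliffordAlgebra Q} (h : ∀ d : Module.Dual R M, contractLeft d x = 0) :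
    x ∈ (⊥ : Subalgebra R (CliffordAlgebra Q)) := by
  let b := Module.Free.chooseBasis R M
  refine mem_bot_of_contractLeft_coord_eq_zero b Finset.univ ?_ fun i _ => h _
  rw [Finset.coe_univ, Set.image_univ, adjoin_ι_image_eq_top b.span_eq]
  exact Algebra.mem_top

theorem mem_bot_of_forall_ι_mul_eq_involute_mul_ι [Module.Free R M] [Module.Finite R M]
    (hQ : Function.Surjective (QuadraticMap.polarBilin Q)) {x : CliffordAlgebra Q}
    (h : ∀ v, ι Q v * x = involute x * ι Q v) : x ∈ (⊥ : Subalgebra R (CliffordAlgebra Q)) := by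
  refine mem_bot_of_forall_contractLeft_eq_zero fun d => ?_
  obtain ⟨v, rfl⟩ := hQ d
  rw [← ι_mul_sub_involute_mul_ι, h v, sub_self]

theorem ι_mul_involute_mul_eq_involute_mul_ι {a b : CliffordAlgebra Q} (hba : b * a = 1)
    (h : ∀ u, ∃ w, a * ι Q u * involute b = ι Q w) (v : M) :
    ι Q v * (involute b * a) = involute (involute b * a) * ι Q v := by
  obtain ⟨w, hw⟩ := h v
  have hw' : involute a * ι Q v * b = ι Q w := by simpa using congrArg involute hw
  calc ι Q v * (involute b * a) = b * (a * ι Q v * involute b) * a := by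
        simp only [← mul_assoc, hba, one_mul]
    _ = b * (involute a * ι Q v * b) * a := by rw [hw, hw']
    _ = involute (involute b * a) * ι Q v := by
        simp only [map_mul, involute_involute, mul_assoc, hba, mul_one]

end CliffordAlgebra

theorem QuadraticMap.polarBilin_surjective_of_eq_neg {F U : Type*} [Field F] (hchar : (2 : F) ≠ 0)
    [AddCommGroup U] [Module F U] [FiniteDimensional F U]
    (S : LinearMap.BilinForm F U) (hS : ∀ x y, S x y = S y x)
    (hnd : ∀ x : U, (∀ y : U, S x y = 0) → x = 0)
    (Q : QuadraticForm F U) (hQ : ∀ u, Q u = -(S u u)) :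
    Function.Surjective (QuadraticMap.polarBilin Q) := by
  have hpolar : ∀ u v, QuadraticMap.polar Q u v = -(2 * S u v) := by
    intro u v
    simp only [QuadraticMap.polar, hQ, map_add, LinearMap.add_apply, hS v u]
    ring
  refine (LinearMap.injective_iff_surjective_of_finrank_eq_finrank
    (Subspace.dual_finrank_eq).symm).mp ((injective_iff_map_eq_zero _).mpr fun u hu => ?_)
  refine hnd u fun y => ?_
  have := LinearMap.congr_fun hu y
  rw [QuadraticMap.polarBilin_apply_apply, hpolar, LinearMap.zero_apply, neg_eq_zero] at this
  exact (mul_eq_zero.mp this).resolve_left hchar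

/-- `Γ(U) ⊆ Γ(U_para)`: if `x ∈ C(U)^×` satisfies `x u (x')⁻¹ ∈ U` for all
`u ∈ U`, then `x y (x')⁻¹` is a paravector (an element of `F·1 ⊕ U`) for every
paravector `y`. -/
theorem stmt_17 {F : Type*} [Field F] (hchar : (2 : F) ≠ 0)
    {U : Type*} [AddCommGroup U] [Module F U] [FiniteDimensional F U]
    (S : LinearMap.BilinForm F U) (hS : ∀ x y, S x y = S y x)
    (hnd : ∀ x : U, (∀ y : U, S x y = 0) → x = 0)
    (Q : QuadraticForm F U) (hQ : ∀ u, Q u = -(S u u))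
    (x : (CliffordAlgebra Q)ˣ)
    (hx : ∀ u : U, ∃ w : U, (x : CliffordAlgebra Q) * ι Q u *
      involute (↑x⁻¹ : CliffordAlgebra Q) = ι Q w) :
    ∀ (c : F) (u : U), ∃ (c' : F) (u' : U),
      (x : CliffordAlgebra Q) * (algebraMap F (CliffordAlgebra Q) c + ι Q u) *
        involute (↑x⁻¹ : CliffordAlgebra Q)
        = algebraMap F (CliffordAlgebra Q) c' + ι Q u' := by
  intro c u
  obtain ⟨c₀, hc₀⟩ := Algebra.mem_bot.mp <| mem_bot_of_forall_ι_mul_eq_involute_mul_ι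
    (QuadraticMap.polarBilin_surjective_of_eq_neg hchar S hS hnd Q hQ)
    (ι_mul_involute_mul_eq_involute_mul_ι x.inv_mul hx)
  have hscalar : (x : CliffordAlgebra Q) * involute (↑x⁻¹ : CliffordAlgebra Q) =
      algebraMap F _ c₀ := by
    calc (x : CliffordAlgebra Q) * involute (↑x⁻¹ : CliffordAlgebra Q)
        = x * (involute (↑x⁻¹ : CliffordAlgebra Q) * x) * ↑x⁻¹ := by
          rw [mul_assoc, mul_assoc, x.mul_inv, mul_one]
      _ = algebraMap F _ c₀ := by rw [← hc₀, ← Algebra.commutes, mul_assoc, x.mul_inv, mul_one]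
  obtain ⟨u', hu'⟩ := hx u
  refine ⟨c * c₀, u', ?_⟩
  rw [mul_add, add_mul, hu', ← Algebra.commutes, mul_assoc, hscalar, ← map_mul]
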